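/- Suppose I : ℝ³ → ℝ satisfies I(S,K,c) > 0 and C_BS(S, K, I(S,K,c)) = c for all (S,K,c) ∈ D_I, and define f(K) := I(eK, K, (e−1)K + eK²) for 0 < K < 1/e (this is well-defined since (e−1)K < (e−1)K + eK² < eK there). Then F(√T · f(K)) = K for all 0 < K < 1/e; equivalently, f(K) = F^{-1}(K)/√T, where F^{-1} : (0,1/e) → (0,∞) is the inverse of F. -/

import Mathlib

/-!
For `S = eK` the log-moneyness is `1`, so with `s = σ√T` the two Black–Scholes arguments are
`d₁,₂ = 1/s ± s/2`. Since `d₂² = d₁² - 2`, `φ(d₂) = e·φ(d₁)`, and the `s`-derivative of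
`e·N(d₁) - N(d₂)` collapses to `e·φ(d₁) = e·F'(s)`. Both sides tend to `e - 1` as `s → 0⁺`,
so `C_BS(eK, K, σ) = (e - 1)K + eK·F(σ√T)`. Matching this with the quoted price
`(e - 1)K + eK²` gives `F(σ√T) = K`; uniqueness comes from strict monotonicity of `F`.
-/

open Real Set Filter

/-- Standard normal cdf. -/
noncomputable def stdNormalCDF (x : ℝ) : ℝ :=
  ∫ t in Set.Iio x, Real.exp (-t ^ 2 / 2) / Real.sqrt (2 * Real.pi)

/-- Black–Scholes call price with maturity `T`. -/
noncomputable def C_BS (T S K σ : ℝ) : ℝ :=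
  S * stdNormalCDF (Real.log (S / K) / (σ * Real.sqrt T) + σ * Real.sqrt T / 2) -
  K * stdNormalCDF (Real.log (S / K) / (σ * Real.sqrt T) - σ * Real.sqrt T / 2)

/-- Standard normal density. -/
noncomputable def stdNormalPDF (x : ℝ) : ℝ :=
  Real.exp (-x ^ 2 / 2) / Real.sqrt (2 * Real.pi)

/-- `F x = ∫_0^x φ(1/v + v/2) dv`. -/
noncomputable def F (x : ℝ) : ℝ :=
  ∫ v in (0 : ℝ)..x, stdNormalPDF (1 / v + v / 2)

/-- The domain of the implied volatility function. -/
def D_I : Set (Fin 3 → ℝ) :=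
  {x | 0 < x 0 ∧ 0 < x 1 ∧ max (x 0 - x 1) 0 < x 2 ∧ x 2 < x 0}

open Topology MeasureTheory ProbabilityTheory

lemma stdNormalPDF_eq_gaussianPDFReal : stdNormalPDF = gaussianPDFReal 0 1 := by
  ext x
  simp [stdNormalPDF, gaussianPDFReal, div_eq_inv_mul]

lemma stdNormalPDF_pos (x : ℝ) : 0 < stdNormalPDF x := by
  rw [stdNormalPDF_eq_gaussianPDFReal]; exact gaussianPDFReal_pos _ _ _ one_ne_zero

@[fun_prop]
lemma continuous_stdNormalPDF : Continuous stdNormalPDF := by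
  unfold stdNormalPDF; fun_prop

lemma stdNormalPDF_le (x : ℝ) : stdNormalPDF x ≤ (√(2 * π))⁻¹ := by
  rw [stdNormalPDF, div_eq_mul_inv]
  refine mul_le_of_le_one_left (by positivity) (exp_le_one_iff.mpr ?_)
  nlinarith [sq_nonneg x]

lemma integrable_stdNormalPDF : Integrable stdNormalPDF := by
  rw [stdNormalPDF_eq_gaussianPDFReal]; exact integrable_gaussianPDFReal _ _

lemma integral_stdNormalPDF : ∫ x, stdNormalPDF x = 1 := by
  rw [stdNormalPDF_eq_gaussianPDFReal]; exact integral_gaussianPDFReal_eq_one _ one_ne_zero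

lemma stdNormalPDF_sub (x y : ℝ) :
    stdNormalPDF (x - y) = exp (2 * x * y) * stdNormalPDF (x + y) := by
  rw [stdNormalPDF, stdNormalPDF, ← mul_div_assoc, ← exp_add]
  congr 2
  ring

lemma stdNormalCDF_eq_integral_Iic (x : ℝ) : stdNormalCDF x = ∫ t in Iic x, stdNormalPDF t :=
  integral_Iic_eq_integral_Iio.symm

lemma stdNormalCDF_sub_stdNormalCDF (a b : ℝ) :
    stdNormalCDF b - stdNormalCDF a = ∫ t in a..b, stdNormalPDF t := by
  rw [stdNormalCDF_eq_integral_Iic, stdNormalCDF_eq_integral_Iic]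
  exact intervalIntegral.integral_Iic_sub_Iic integrable_stdNormalPDF.integrableOn
    integrable_stdNormalPDF.integrableOn

lemma hasDerivAt_stdNormalCDF (x : ℝ) : HasDerivAt stdNormalCDF (stdNormalPDF x) x := by
  have h : stdNormalCDF = fun y ↦ stdNormalCDF 0 + ∫ t in (0 : ℝ)..y, stdNormalPDF t := by
    ext y; rw [← stdNormalCDF_sub_stdNormalCDF]; ring
  rw [h]
  exact (intervalIntegral.integral_hasDerivAt_right integrable_stdNormalPDF.intervalIntegrable
    (continuous_stdNormalPDF.stronglyMeasurableAtFilter _ _)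
    continuous_stdNormalPDF.continuousAt).const_add _

lemma tendsto_stdNormalCDF_atTop : Tendsto stdNormalCDF atTop (𝓝 1) := by
  have h := (aecover_Iic (μ := volume) tendsto_id).integral_tendsto_of_countably_generated
    integrable_stdNormalPDF
  rw [integral_stdNormalPDF] at h
  exact h.congr fun x ↦ (stdNormalCDF_eq_integral_Iic x).symm

lemma intervalIntegrable_stdNormalPDF_comp {g : ℝ → ℝ} (hg : Measurable g) (a b : ℝ) :
    IntervalIntegrable (fun v ↦ stdNormalPDF (g v)) volume a b := by
  rw [intervalIntegrable_iff]
  refine Measure.integrableOn_of_bounded measure_Ioc_lt_top.ne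
    (continuous_stdNormalPDF.measurable.comp hg).aestronglyMeasurable (M := (√(2 * π))⁻¹) ?_
  filter_upwards with x
  rw [norm_of_nonneg (stdNormalPDF_pos _).le]
  exact stdNormalPDF_le _

lemma measurable_one_div_add_half : Measurable fun v : ℝ ↦ 1 / v + v / 2 := by
  fun_prop

lemma F_sub_F (a b : ℝ) : F b - F a = ∫ v in a..b, stdNormalPDF (1 / v + v / 2) :=
  intervalIntegral.integral_interval_sub_left
    (intervalIntegrable_stdNormalPDF_comp measurable_one_div_add_half _ _)
    (intervalIntegrable_stdNormalPDF_comp measurable_one_div_add_half _ _)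

lemma F_strictMono : StrictMono F := fun a b hab ↦ by
  have h := intervalIntegral.intervalIntegral_pos_of_pos_on
    (intervalIntegrable_stdNormalPDF_comp measurable_one_div_add_half a b)
    (fun x _ ↦ stdNormalPDF_pos _) hab
  linarith [F_sub_F a b]

lemma continuous_F : Continuous F :=
  intervalIntegral.continuous_primitive
    (intervalIntegrable_stdNormalPDF_comp measurable_one_div_add_half) 0

lemma hasDerivAt_F {s : ℝ} (hs : 0 < s) : HasDerivAt F (stdNormalPDF (1 / s + s / 2)) s :=
  intervalIntegral.integral_hasDerivAt_right
    (intervalIntegrable_stdNormalPDF_comp measurable_one_div_add_half 0 s)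
    (continuous_stdNormalPDF.measurable.comp
      measurable_one_div_add_half).aestronglyMeasurable.stronglyMeasurableAtFilter
    (by fun_prop (disch := exact hs.ne'))

lemma tendsto_F_nhdsGT_zero : Tendsto F (𝓝[>] 0) (𝓝 0) :=
  (continuous_F.tendsto' 0 0 (by simp [F])).mono_left nhdsWithin_le_nhds

lemma eqOn_Ioi_of_hasDerivAt_zero_of_tendsto {g : ℝ → ℝ} {a L : ℝ}
    (hg : ∀ x ∈ Ioi a, HasDerivAt g 0 x) (hlim : Tendsto g (𝓝[>] a) (𝓝 L)) :
    EqOn g (fun _ ↦ L) (Ioi a) := by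
  have hconst : ∀ x ∈ Ioi a, ∀ y ∈ Ioi a, g x = g y := fun x hx y hy ↦
    isOpen_Ioi.is_const_of_deriv_eq_zero isPreconnected_Ioi
      (fun z hz ↦ (hg z hz).differentiableAt.differentiableWithinAt)
      (fun z hz ↦ (hg z hz).deriv) hx hy
  intro x hx
  refine tendsto_nhds_unique (tendsto_const_nhds.congr' ?_) hlim
  filter_upwards [self_mem_nhdsWithin] with y hy
  exact hconst x hx y hy

lemma hasDerivAt_exp_one_mul_stdNormalCDF_sub_stdNormalCDF {s : ℝ} (hs : 0 < s) :
    HasDerivAt (fun v ↦ exp 1 * stdNormalCDF (1 / v + v / 2) - stdNormalCDF (1 / v - v / 2))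
      (exp 1 * stdNormalPDF (1 / s + s / 2)) s := by
  have hinv : HasDerivAt (fun v : ℝ ↦ 1 / v) (-(1 / s ^ 2)) s := by
    simpa [one_div] using hasDerivAt_inv hs.ne'
  have hd₁ : HasDerivAt (fun v ↦ 1 / v + v / 2) (-(1 / s ^ 2) + 1 / 2) s :=
    hinv.add ((hasDerivAt_id s).div_const 2)
  have hd₂ : HasDerivAt (fun v ↦ 1 / v - v / 2) (-(1 / s ^ 2) - 1 / 2) s :=
    hinv.sub ((hasDerivAt_id s).div_const 2)
  refine ((((hasDerivAt_stdNormalCDF _).comp s hd₁).const_mul (exp 1)).sub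
    ((hasDerivAt_stdNormalCDF _).comp s hd₂)).congr_deriv ?_
  rw [stdNormalPDF_sub, show 2 * (1 / s) * (s / 2) = 1 by field_simp]
  ring

lemma exp_one_mul_stdNormalCDF_sub_stdNormalCDF {s : ℝ} (hs : 0 < s) :
    exp 1 * stdNormalCDF (1 / s + s / 2) - stdNormalCDF (1 / s - s / 2)
      = exp 1 - 1 + exp 1 * F s := by
  set g : ℝ → ℝ := fun v ↦
    exp 1 * stdNormalCDF (1 / v + v / 2) - stdNormalCDF (1 / v - v / 2) - exp 1 * F v
  have hderiv : ∀ v ∈ Ioi (0 : ℝ), HasDerivAt g 0 v := fun v hv ↦ by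
    have h := (hasDerivAt_exp_one_mul_stdNormalCDF_sub_stdNormalCDF hv).sub
      ((hasDerivAt_F hv).const_mul (exp 1))
    rwa [sub_self] at h
  have hinv : Tendsto (fun v : ℝ ↦ 1 / v) (𝓝[>] 0) atTop := by
    simpa [one_div] using tendsto_inv_nhdsGT_zero (𝕜 := ℝ)
  have hhalf : Tendsto (fun v : ℝ ↦ v / 2) (𝓝[>] 0) (𝓝 0) :=
    ((continuous_id.div_const 2).tendsto' 0 0 (by simp)).mono_left nhdsWithin_le_nhds
  have hd₁ := tendsto_stdNormalCDF_atTop.comp (hinv.atTop_add hhalf)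
  have hd₂ := tendsto_stdNormalCDF_atTop.comp (hinv.atTop_add hhalf.neg)
  have hlim : Tendsto g (𝓝[>] 0) (𝓝 (exp 1 - 1)) := by
    simpa [g, Function.comp_def, sub_eq_add_neg] using
      ((hd₁.const_mul (exp 1)).sub hd₂).sub (tendsto_F_nhdsGT_zero.const_mul (exp 1))
  have := eqOn_Ioi_of_hasDerivAt_zero_of_tendsto hderiv hlim hs
  simp only [g] at this
  linarith

lemma C_BS_exp_one_mul {T K σ : ℝ} (hK : 0 < K) (hs : 0 < σ * √T) :
    C_BS T (exp 1 * K) K σ = (exp 1 - 1) * K + exp 1 * K * F (σ * √T) := by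
  have hlog : log (exp 1 * K / K) = 1 := by
    rw [mul_div_assoc, div_self hK.ne', mul_one, log_exp]
  have h := exp_one_mul_stdNormalCDF_sub_stdNormalCDF hs
  rw [C_BS, hlog]
  linear_combination K * h

lemma specialization_mem_D_I {K : ℝ} (hK : K ∈ Ioo 0 (1 / exp 1)) :
    ![exp 1 * K, K, (exp 1 - 1) * K + exp 1 * K ^ 2] ∈ D_I := by
  obtain ⟨hK₀, hK₁⟩ := hK
  have he : 1 < exp 1 := one_lt_exp_iff.mpr one_pos
  have heK : exp 1 * K < 1 := by rwa [lt_div_iff₀ (by positivity), mul_comm] at hK₁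
  refine ⟨by simp only [Matrix.cons_val_zero]; positivity, hK₀, ?_, ?_⟩
  · simp only [Matrix.cons_val]
    rw [max_eq_left (by nlinarith)]
    nlinarith
  · simp only [Matrix.cons_val]
    nlinarith

/-- The specialization `f(K) = I(eK, K, (e−1)K + eK²)` satisfies
`F(√T·f(K)) = K`, i.e. `f(K) = F⁻¹(K)/√T`, for `0 < K < 1/e`. -/
theorem implied_vol_specialization (T : ℝ) (hT : 0 < T)
    (I : (Fin 3 → ℝ) → ℝ)
    (hIpos : ∀ x ∈ D_I, 0 < I x)
    (hI : ∀ x ∈ D_I, C_BS T (x 0) (x 1) (I x) = x 2)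
    (f : ℝ → ℝ)
    (hf : ∀ K : ℝ, f K = I ![Real.exp 1 * K, K,
      (Real.exp 1 - 1) * K + Real.exp 1 * K ^ 2]) :
    ∀ K ∈ Set.Ioo (0 : ℝ) (1 / Real.exp 1),
      F (Real.sqrt T * f K) = K ∧
      ∀ G : ℝ → ℝ,
        (∀ y ∈ Set.Ioo (0 : ℝ) (1 / Real.exp 1), 0 < G y ∧ F (G y) = y) →
        f K = G K / Real.sqrt T := by
  intro K hK
  have hx := specialization_mem_D_I hK
  have hsT : 0 < √T := sqrt_pos.mpr hT
  have hs : 0 < f K * √T := by rw [hf]; exact mul_pos (hIpos _ hx) hsT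
  have hprice := hI _ hx
  rw [← hf] at hprice
  simp only [Matrix.cons_val] at hprice
  rw [C_BS_exp_one_mul hK.1 hs] at hprice
  have hFK : F (√T * f K) = K := by
    rw [mul_comm]
    exact mul_left_cancel₀ (mul_pos (exp_pos 1) hK.1).ne' (by linear_combination hprice)
  refine ⟨hFK, fun G hG ↦ ?_⟩
  obtain ⟨-, hGK⟩ := hG K hK
  rw [eq_div_iff hsT.ne', mul_comm]
  exact F_strictMono.injective (hFK.trans hGK.symm)
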